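/- Let D be a measurable space, let f be a trade-off function, let P be a probability measure on D, let ℓ : D × D → ℝ be jointly measurable, let γ ∈ ℝ, and let ρ be a Markov kernel from D to D such that for all z, z' ∈ D and every measurable φ : D → [0,1], ∫ φ d(ρ(z)) ≤ 1 − f(∫ φ d(ρ(z'))). Define succ := ∫_D ρ(z)({ẑ : ℓ(z,ẑ) ≤ γ}) dP(z) and base := ∫_D ∫_D ρ(z')({ẑ : ℓ(z,ẑ) ≤ γ}) dP(z') dP(z). Then succ ≤ 1 − f(base). -/

import Mathlib

open MeasureTheory ProbabilityTheory

/-- A trade-off function: convex, continuous, non-increasing on `[0,1]`,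
taking values in `[0,1]` with `f α ≤ 1 - α`. -/
def IsTradeoff (f : ℝ → ℝ) : Prop :=
  ConvexOn ℝ (Set.Icc (0:ℝ) 1) f ∧ ContinuousOn f (Set.Icc (0:ℝ) 1) ∧
  AntitoneOn f (Set.Icc (0:ℝ) 1) ∧
  ∀ x ∈ Set.Icc (0:ℝ) 1, f x ∈ Set.Icc (0:ℝ) 1 ∧ f x ≤ 1 - x

/-- The pair `(P, Q)` satisfies the `f`-DP inequality: every randomized test `φ` has
`∫ φ dQ ≤ 1 - f (∫ φ dP)`. -/
def FDPIneq {Θ : Type*} [MeasurableSpace Θ] (f : ℝ → ℝ) (P Q : Measure Θ) : Prop :=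
  ∀ φ : Θ → ℝ, Measurable φ → (∀ θ, φ θ ∈ Set.Icc (0:ℝ) 1) →
    ∫ θ, φ θ ∂Q ≤ 1 - f (∫ θ, φ θ ∂P)

/-!
Testing with the indicator of `E z = {ẑ | ℓ z ẑ ≤ γ}` gives `ρ z (E z) ≤ 1 - f (ρ z' (E z))` for
every `z'`. Averaging over `z' ∼ P` and applying Jensen to the convex `f` bounds the success
probability at `z` by `1 - f (b z)`, where `b z = ∫ ρ z' (E z) dP(z')`. Integrating over `z ∼ P`
and applying Jensen once more gives `succ ≤ 1 - ∫ f ∘ b dP ≤ 1 - f base`.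
-/

section Jensen

variable {α : Type*} [MeasurableSpace α] {μ : Measure α}

theorem ContinuousOn.integrable_comp_of_isCompact [IsFiniteMeasure μ]
    {β : Type*} [TopologicalSpace β] [MeasurableSpace β] [OpensMeasurableSpace β]
    {s : Set β} (hs : IsCompact s) {φ : β → ℝ} (hφ : ContinuousOn φ s)
    {g : α → β} (hg : Measurable g) (hgs : ∀ x, g x ∈ s) :
    Integrable (fun x => φ (g x)) μ := by
  obtain ⟨C, hC⟩ := hs.exists_bound_of_continuousOn hφ
  have hmeas : Measurable fun x => φ (g x) :=
    hφ.domRestrict.measurable.comp (hg.subtype_mk (h := hgs))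
  exact .of_bound hmeas.aestronglyMeasurable C (.of_forall fun x => hC _ (hgs x))

theorem ConvexOn.map_integral_le_of_isCompact [IsProbabilityMeasure μ]
    {s : Set ℝ} (hs : IsCompact s) {f : ℝ → ℝ} (hconv : ConvexOn ℝ s f)
    (hcont : ContinuousOn f s) {g : α → ℝ} (hg : Measurable g) (hgs : ∀ x, g x ∈ s) :
    f (∫ x, g x ∂μ) ≤ ∫ x, f (g x) ∂μ :=
  hconv.map_integral_le hcont hs.isClosed (.of_forall hgs)
    (continuousOn_id.integrable_comp_of_isCompact hs hg hgs)
    (hcont.integrable_comp_of_isCompact hs hg hgs)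

end Jensen

theorem ProbabilityTheory.Kernel.measurable_kernel_prodMk_preimage
    {α β γ : Type*} [MeasurableSpace α] [MeasurableSpace β] [MeasurableSpace γ]
    (κ : Kernel α β) [IsSFiniteKernel κ] {s : Set (γ × β)} (hs : MeasurableSet s) :
    Measurable fun p : γ × α => κ p.2 (Prod.mk p.1 ⁻¹' s) :=
  (κ.comap Prod.snd measurable_snd).measurable_kernel_prodMk_left
    (t := {q : (γ × α) × β | (q.1.1, q.2) ∈ s}) (hs.preimage (by fun_prop))

section FDP

variable {Θ : Type*} [MeasurableSpace Θ] {f : ℝ → ℝ}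

theorem FDPIneq.measureReal_le {P Q : Measure Θ} (h : FDPIneq f P Q)
    {s : Set Θ} (hs : MeasurableSet s) : Q.real s ≤ 1 - f (P.real s) := by
  have h01 : ∀ θ, s.indicator (1 : Θ → ℝ) θ ∈ Set.Icc (0 : ℝ) 1 := fun θ => by
    by_cases hθ : θ ∈ s <;> simp [hθ]
  simpa only [integral_indicator_one hs] using h _ (measurable_one.indicator hs) h01

/-- A test passed against every component `κ a` is passed, by convexity of `f`, against the
mixture `∫ κ a dP(a)`. -/
theorem FDPIneq.measureReal_le_one_sub_integral
    (hconv : ConvexOn ℝ (Set.Icc 0 1) f) (hcont : ContinuousOn f (Set.Icc 0 1))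
    {α : Type*} [MeasurableSpace α] {κ : Kernel α Θ} [IsMarkovKernel κ] {ν : Measure Θ}
    (P : Measure α) [IsProbabilityMeasure P] (h : ∀ a, FDPIneq f (κ a) ν)
    {s : Set Θ} (hs : MeasurableSet s) :
    ν.real s ≤ 1 - f (∫ a, (κ a).real s ∂P) := by
  have hκs : Measurable fun a => (κ a).real s := (κ.measurable_coe hs).ennreal_toReal
  have hκs_mem : ∀ a, (κ a).real s ∈ Set.Icc (0 : ℝ) 1 :=
    fun a => ⟨measureReal_nonneg, measureReal_le_one⟩
  have hmix : f (∫ a, (κ a).real s ∂P) ≤ 1 - ν.real s :=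
    calc f (∫ a, (κ a).real s ∂P) ≤ ∫ a, f ((κ a).real s) ∂P :=
          hconv.map_integral_le_of_isCompact isCompact_Icc hcont hκs hκs_mem
      _ ≤ ∫ _, (1 - ν.real s) ∂P :=
          integral_mono (hcont.integrable_comp_of_isCompact isCompact_Icc hκs hκs_mem)
            (integrable_const _) fun a => by linarith [(h a).measureReal_le hs]
      _ = 1 - ν.real s := by simp
  linarith

end FDP

/-- Proposition E.2, first part: `f`-DP bound for unbiased reconstruction
robustness (on-average baseline). -/
theorem stmt_17 {D : Type*} [MeasurableSpace D]
    (f : ℝ → ℝ) (hf : IsTradeoff f)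
    (P : Measure D) [IsProbabilityMeasure P]
    (ℓ : D → D → ℝ) (hℓ : Measurable (Function.uncurry ℓ)) (γ : ℝ)
    (ρ : Kernel D D) [IsMarkovKernel ρ]
    (hDP : ∀ z z' : D, FDPIneq f (ρ z') (ρ z))
    (succ base : ℝ)
    (hsucc : succ = ∫ z, ((ρ z) {zhat : D | ℓ z zhat ≤ γ}).toReal ∂P)
    (hbase : base = ∫ z, ∫ z', ((ρ z') {zhat : D | ℓ z zhat ≤ γ}).toReal ∂P ∂P) :
    succ ≤ 1 - f base := by
  obtain ⟨hconv, hcont, -⟩ := hf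
  have hS : MeasurableSet {p : D × D | ℓ p.1 p.2 ≤ γ} := hℓ measurableSet_Iic
  set b : D → ℝ := fun z => ∫ z', (ρ z').real {zhat | ℓ z zhat ≤ γ} ∂P
  have hb : Measurable b :=
    ((ρ.measurable_kernel_prodMk_preimage hS).ennreal_toReal.stronglyMeasurable
      |>.integral_prod_right' (ν := P)).measurable
  have hb_mem : ∀ z, b z ∈ Set.Icc (0 : ℝ) 1 := fun z =>
    ⟨integral_nonneg fun _ => measureReal_nonneg,
      (integral_mono_of_nonneg (.of_forall fun _ => measureReal_nonneg) (integrable_const 1)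
        (.of_forall fun _ => measureReal_le_one)).trans_eq (by simp)⟩
  have hsucc_meas : Measurable fun z => (ρ z).real {zhat | ℓ z zhat ≤ γ} :=
    (ρ.measurable_kernel_prodMk_left hS).ennreal_toReal
  have hfb_int : Integrable (fun z => f (b z)) P :=
    hcont.integrable_comp_of_isCompact isCompact_Icc hb hb_mem
  calc succ = ∫ z, (ρ z).real {zhat | ℓ z zhat ≤ γ} ∂P := hsucc
    _ ≤ ∫ z, (1 - f (b z)) ∂P :=
        integral_mono
          (continuousOn_id.integrable_comp_of_isCompact isCompact_Icc hsucc_meas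
            fun _ => ⟨measureReal_nonneg, measureReal_le_one⟩)
          ((integrable_const 1).sub hfb_int)
          fun z => FDPIneq.measureReal_le_one_sub_integral hconv hcont P (hDP z)
            (hS.preimage measurable_prodMk_left)
    _ = 1 - ∫ z, f (b z) ∂P := by rw [integral_sub (integrable_const 1) hfb_int]; simp
    _ ≤ 1 - f base := by
        rw [hbase]
        exact sub_le_sub_left (hconv.map_integral_le_of_isCompact isCompact_Icc hcont hb hb_mem) 1
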